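/- arXiv:0906.1091 — 4 statements merged into one kernel-verified Lean document; each statement's English description precedes it below -/
import Mathlib

section
/- The function x ↦ (2π cot x)/(π - 2x) is strictly decreasing on (0, π/2). -/
/-!
Differentiate: since `cot' = -1 / sin²` and `2 sin x cos x = sin (π - 2x)`, the derivative of
`2π cot x / (π - 2x)` is `2π (sin (π - 2x) - (π - 2x)) / (sin² x (π - 2x)²)`, which is negative
on `(0, π/2)` because `sin t < t` for `t > 0`.
-/

open Real Set

theorem Real.hasDerivAt_cot {x : ℝ} (hx : sin x ≠ 0) : HasDerivAt cot (-1 / sin x ^ 2) x := by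
  have h := (hasDerivAt_cos x).div (hasDerivAt_sin x) hx
  rw [funext cot_eq_cos_div_sin]
  refine h.congr_deriv ?_
  field_simp
  linear_combination -sin_sq_add_cos_sq x

theorem hasDerivAt_const_mul_cot_div_pi_sub_two_mul (c : ℝ) {x : ℝ} (hx : sin x ≠ 0)
    (hx' : π - 2 * x ≠ 0) :
    HasDerivAt (fun y => c * cot y / (π - 2 * y))
      (c * (sin (2 * x) - (π - 2 * x)) / (sin x ^ 2 * (π - 2 * x) ^ 2)) x := by
  have hden : HasDerivAt (fun y => π - 2 * y) (-2) x := by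
    simpa using ((hasDerivAt_id x).const_mul 2).const_sub π
  refine (((hasDerivAt_cot hx).const_mul c).div hden hx').congr_deriv ?_
  rw [cot_eq_cos_div_sin, sin_two_mul]
  field_simp
  ring

theorem sin_two_mul_lt_pi_sub_two_mul {x : ℝ} (hx : x < π / 2) : sin (2 * x) < π - 2 * x := by
  rw [← sin_pi_sub]
  exact sin_lt (by linarith)

/-- x ↦ 2π·cot x/(π - 2x) is strictly decreasing on (0, π/2). -/
theorem strictAnti_cot_quotient :
    StrictAntiOn (fun x : ℝ => 2 * π * Real.cot x / (π - 2 * x)) (Ioo 0 (π / 2)) := by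
  have hsin : ∀ x ∈ Ioo 0 (π / 2), 0 < sin x := fun x hx =>
    sin_pos_of_pos_of_lt_pi hx.1 (hx.2.trans (half_lt_self pi_pos))
  have hgap : ∀ x ∈ Ioo 0 (π / 2), 0 < π - 2 * x := fun x hx => by linarith [hx.2]
  have hderiv : ∀ x ∈ Ioo 0 (π / 2), HasDerivAt (fun x : ℝ => 2 * π * cot x / (π - 2 * x))
      (2 * π * (sin (2 * x) - (π - 2 * x)) / (sin x ^ 2 * (π - 2 * x) ^ 2)) x := fun x hx =>
    hasDerivAt_const_mul_cot_div_pi_sub_two_mul _ (hsin x hx).ne' (hgap x hx).ne'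
  refine strictAntiOn_of_deriv_neg (convex_Ioo _ _)
    (fun x hx => (hderiv x hx).continuousAt.continuousWithinAt) fun x hx => ?_
  rw [interior_Ioo] at hx
  rw [(hderiv x hx).deriv]
  have hnum : sin (2 * x) - (π - 2 * x) < 0 := by linarith [sin_two_mul_lt_pi_sub_two_mul hx.2]
  have hsin_x := hsin x hx
  have hgap_x := hgap x hx
  exact div_neg_of_neg_of_pos (mul_neg_of_pos_of_neg (by positivity) hnum) (by positivity)
end

section
/- Let L > 0, n ≥ 1, λₙ = n²π²/L², and let a ∈ L¹(0,L) with a(x) ≥ λₙ a.e. and a > λₙ on a set of positive measure. Suppose u is a nontrivial H¹ solution of u'' + a u = 0 on (0,L) with u'(0) = u'(L) = 0, and suppose x_i < x_{i+1} are such that u(x_i) = 0, u'(x_{i+1}) = 0, and u, u' have no zeros in (x_i, x_{i+1}). Then x_{i+1} - x_i ≤ L/(2n). -/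
/-!
Put `d = x_{i+1} - x_i`, `k = π / (2d)` and `φ(x) = sin (k (x - x_i))`, the first
eigenfunction of `φ'' + k² φ = 0`, `φ(x_i) = 0`, `φ'(x_{i+1}) = 0`. If `d > L / (2n)`, then
`k² < λₙ ≤ a`.
The Wronskian `W = u' φ - u φ'` vanishes at both ends and `W' = -(a - k²) u φ`, so
`∫ (a - k²) u φ = 0` over `[x_i, x_{i+1}]`, although the integrand has the strict sign of `u`.

Since `a` is only integrable, `u'` is merely absolutely continuous and the identity is the
fundamental theorem of calculus for absolutely continuous functions. That `a u` is integrable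
up to `x_{i+1}` is itself part of the argument: with `u > 0` on the gap, `u'` is positive there
(otherwise `u` would decrease from `u(x_i) = 0`), so `∫_{x_i}^c a u = u'(x_i) - u'(c)` is
bounded by `u'(x_i)`.
-/

open MeasureTheory Real Set intervalIntegral Filter Topology

theorem AbsolutelyContinuousOnInterval.congr {f g : ℝ → ℝ} {a b : ℝ}
    (hf : AbsolutelyContinuousOnInterval f a b) (hfg : EqOn f g (uIcc a b)) :
    AbsolutelyContinuousOnInterval g a b := by
  refine hf.congr' ?_
  filter_upwards [mem_inf_of_right (mem_principal_self _)] with E hE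
  exact Finset.sum_congr rfl fun i hi => by rw [hfg (hE.1 i hi).1, hfg (hE.1 i hi).2]

theorem AbsolutelyContinuousOnInterval.of_eqOn_add_integral {f g : ℝ → ℝ} {a b C : ℝ}
    (hg : IntervalIntegrable g volume a b) (hf : ∀ x ∈ uIcc a b, f x = C + ∫ t in a..x, g t) :
    AbsolutelyContinuousOnInterval f a b :=
  ((contDiffOn_const (c := C)).absolutelyContinuousOnInterval.fun_add
    (hg.absolutelyContinuousOnInterval_intervalIntegral left_mem_uIcc)).congr
    fun x hx => (hf x hx).symm

theorem ae_hasDerivAt_of_eqOn_add_integral {f g : ℝ → ℝ} {a b C : ℝ}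
    (hg : IntervalIntegrable g volume a b) (hf : ∀ x ∈ uIcc a b, f x = C + ∫ t in a..x, g t) :
    ∀ᵐ x, x ∈ Ioo a b → HasDerivAt f (g x) x := by
  have hsub : Ioo a b ⊆ uIcc a b := Ioo_subset_Icc_self.trans Icc_subset_uIcc
  filter_upwards [hg.ae_hasDerivAt_integral] with x hx hxab
  refine ((hx (hsub hxab) a left_mem_uIcc).const_add C).congr_of_eventuallyEq ?_
  filter_upwards [isOpen_Ioo.mem_nhds hxab] with y hy using hf y (hsub hy)

theorem AbsolutelyContinuousOnInterval.of_hasDerivAt {f f' : ℝ → ℝ} {a b : ℝ}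
    (hf : ∀ x, HasDerivAt f (f' x) x) (hf' : Continuous f') :
    AbsolutelyContinuousOnInterval f a b := by
  have hderiv : deriv f = f' := funext fun x => (hf x).deriv
  exact (contDiff_one_iff_deriv.2 ⟨fun x => (hf x).differentiableAt, hderiv ▸ hf'⟩).contDiffOn
    |>.absolutelyContinuousOnInterval

theorem integral_mul_eq_wronskian_sub {u v w φ ψ : ℝ → ℝ} {p q μ : ℝ} (hpq : p ≤ q)
    (hu : AbsolutelyContinuousOnInterval u p q) (hv : AbsolutelyContinuousOnInterval v p q)
    (hu' : ∀ᵐ x, x ∈ Ioo p q → HasDerivAt u (v x) x)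
    (hv' : ∀ᵐ x, x ∈ Ioo p q → HasDerivAt v (-w x) x)
    (hφ : ∀ x, HasDerivAt φ (ψ x) x) (hψ : ∀ x, HasDerivAt ψ (-(μ * φ x)) x) :
    ∫ x in p..q, (w x - μ * u x) * φ x =
      (v p * φ p - u p * ψ p) - (v q * φ q - u q * ψ q) := by
  have hψc : Continuous ψ := continuous_iff_continuousAt.2 fun x => (hψ x).continuousAt
  have hφψ : Continuous fun x => -(μ * φ x) :=
    (continuous_const.mul (continuous_iff_continuousAt.2 fun x => (hφ x).continuousAt)).neg
  have hW := (hv.fun_mul (.of_hasDerivAt hφ hψc)).fun_sub (hu.fun_mul (.of_hasDerivAt hψ hφψ))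
  rw [← neg_sub, ← hW.integral_deriv_eq_sub, ← intervalIntegral.integral_neg]
  refine integral_congr_ae ?_
  have hq : ∀ᵐ x, x ≠ q := by simp [ae_iff, measure_singleton]
  filter_upwards [hu', hv', hq] with x hux hvx hxq hx
  rw [uIoc_of_le hpq] at hx
  have hxpq : x ∈ Ioo p q := ⟨hx.1, lt_of_le_of_ne hx.2 hxq⟩
  have hW' : HasDerivAt (fun y => v y * φ y - u y * ψ y) _ x :=
    ((hvx hxpq).mul (hφ x)).sub ((hux hxpq).mul (hψ x))
  rw [hW'.deriv]
  ring

theorem intervalIntegrable_of_nonneg_of_integral_le {f : ℝ → ℝ} {a b I : ℝ} (hab : a < b)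
    (hf : ∀ c ∈ Ioo a b, IntervalIntegrable f volume a c)
    (hf₀ : ∀ᵐ x ∂volume.restrict (Ioo a b), 0 ≤ f x)
    (hI : ∀ c ∈ Ioo a b, ∫ x in a..c, f x ≤ I) : IntervalIntegrable f volume a b := by
  obtain ⟨s, -, hs, hst⟩ := exists_seq_strictMono_tendsto' hab
  rw [intervalIntegrable_iff_integrableOn_Ioc_of_le hab.le]
  refine integrableOn_Ioc_of_intervalIntegral_norm_bounded_right (I := I)
    (fun i => (hf _ (hs i)).1) hst (Eventually.of_forall fun i => ?_)
  have hnorm : ∀ᵐ x ∂volume.restrict (Ioc a (s i)), ‖f x‖ = f x :=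
    (ae_restrict_of_ae_restrict_of_subset (Ioc_subset_Ioo_right (hs i).2) hf₀).mono
      fun x hx => Real.norm_of_nonneg hx
  rw [integral_congr_ae hnorm, ← integral_of_le (hs i).1.le]
  exact hI _ (hs i)

theorem intervalIntegral_pos_of_ae_pos {f : ℝ → ℝ} {a b : ℝ} (hab : a < b)
    (hfi : IntervalIntegrable f volume a b)
    (hf : ∀ᵐ x ∂volume.restrict (Ioo a b), 0 < f x) : 0 < ∫ x in a..b, f x := by
  rw [integral_of_le hab.le, integral_Ioc_eq_integral_Ioo,
    integral_pos_iff_support_of_nonneg_ae (hf.mono fun _ h => h.le)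
      (hfi.1.mono_set Ioo_subset_Ioc_self)]
  have : Function.support f =ᵐ[volume.restrict (Ioo a b)] univ :=
    ae_eq_univ.2 (mem_ae_iff.1 (hf.mono fun _ h => h.ne'))
  rw [measure_congr this, Measure.restrict_apply_univ]
  exact Measure.measure_Ioo_pos _ |>.2 hab

theorem ContinuousOn.pos_or_neg_of_ne_zero {α : Type*} [TopologicalSpace α] {f : α → ℝ}
    {s : Set α} (hs : IsPreconnected s) (hf : ContinuousOn f s) (h₀ : ∀ x ∈ s, f x ≠ 0) :
    (∀ x ∈ s, 0 < f x) ∨ ∀ x ∈ s, f x < 0 := by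
  by_contra! ⟨⟨x, hx, hfx⟩, ⟨y, hy, hfy⟩⟩
  obtain ⟨z, hz, hfz⟩ := hs.intermediate_value hx hy hf ⟨hfx, hfy⟩
  exact h₀ z hz hfz

theorem hasDerivAt_sin_mul_sub (k c x : ℝ) :
    HasDerivAt (fun y => sin (k * (y - c))) (k * cos (k * (x - c))) x := by
  simpa [mul_comm] using (((hasDerivAt_id' x).sub_const c).const_mul k).sin

theorem hasDerivAt_mul_cos_mul_sub (k c x : ℝ) :
    HasDerivAt (fun y => k * cos (k * (y - c))) (-(k ^ 2 * sin (k * (x - c)))) x :=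
  ((((hasDerivAt_id' x).sub_const c).const_mul k).cos.const_mul k).congr_deriv (by ring)

theorem sq_pi_div_two_mul_lt {L d : ℝ} {n : ℕ} (hL : 0 < L) (hn : 1 ≤ n)
    (hd : L / (2 * n) < d) : (π / (2 * d)) ^ 2 < n ^ 2 * π ^ 2 / L ^ 2 := by
  have hn0 : (0 : ℝ) < n := by exact_mod_cast hn
  have hLd : L < 2 * n * d := by rwa [div_lt_iff₀ (by positivity), mul_comm] at hd
  have hd0 : 0 < d := by nlinarith
  have hlt : π / (2 * d) < n * π / L := by
    rw [div_lt_div_iff₀ (by positivity) hL]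
    nlinarith [pi_pos]
  calc (π / (2 * d)) ^ 2 < (n * π / L) ^ 2 := by gcongr
    _ = n ^ 2 * π ^ 2 / L ^ 2 := by ring

theorem sin_pi_div_two_mul_sub_pos {p q x : ℝ} (hx : x ∈ Ioo p q) :
    0 < sin (π / (2 * (q - p)) * (x - p)) := by
  have hqp : 0 < q - p := by linarith [hx.1, hx.2]
  apply sin_pos_of_pos_of_lt_pi (by have := sub_pos.2 hx.1; positivity)
  calc π / (2 * (q - p)) * (x - p) < π / (2 * (q - p)) * (q - p) := by
        gcongr; exact hx.2
    _ = π / 2 := by field_simp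
    _ < π := by linarith [pi_pos]

def IsIntegralSolution (L : ℝ) (a u v : ℝ → ℝ) : Prop :=
  (∀ x ∈ Icc (0:ℝ) L, u x = u 0 + ∫ t in (0:ℝ)..x, v t) ∧
    ∀ x ∈ Icc (0:ℝ) L, v x = - ∫ t in (0:ℝ)..x, a t * u t

namespace IsIntegralSolution

variable {L c p q : ℝ} {a u v : ℝ → ℝ}

theorem neg (h : IsIntegralSolution L a u v) :
    IsIntegralSolution L a (fun x => -u x) (fun x => -v x) :=
  ⟨fun x hx => by simp only [intervalIntegral.integral_neg, h.1 x hx]; ring,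
    fun x hx => by simp only [mul_neg, intervalIntegral.integral_neg, h.2 x hx]⟩

theorem eqOn_u (h : IsIntegralSolution L a u v) (hc : c ∈ Icc 0 L) :
    ∀ x ∈ uIcc 0 c, u x = u 0 + ∫ t in (0:ℝ)..x, v t := fun x hx => by
  rw [uIcc_of_le hc.1] at hx
  exact h.1 x ⟨hx.1, hx.2.trans hc.2⟩

theorem eqOn_v (h : IsIntegralSolution L a u v) (hc : c ∈ Icc 0 L) :
    ∀ x ∈ uIcc 0 c, v x = 0 + ∫ t in (0:ℝ)..x, -(a t * u t) := fun x hx => by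
  rw [uIcc_of_le hc.1] at hx
  rw [zero_add, intervalIntegral.integral_neg, h.2 x ⟨hx.1, hx.2.trans hc.2⟩]

theorem intervalIntegrable_of_ne_zero (h : IsIntegralSolution L a u v) (hc : c ∈ Icc 0 L)
    (hvc : v c ≠ 0) : IntervalIntegrable (fun t => a t * u t) volume 0 c := by
  by_contra hint
  -- a non-integrable interval integral is `0` by convention
  rw [h.2 c hc, integral_undef hint, neg_zero] at hvc
  exact hvc rfl

theorem absolutelyContinuousOnInterval_v (h : IsIntegralSolution L a u v) (hc : c ∈ Icc 0 L)
    (hint : IntervalIntegrable (fun t => a t * u t) volume 0 c) :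
    AbsolutelyContinuousOnInterval v 0 c :=
  .of_eqOn_add_integral hint.neg (h.eqOn_v hc)

theorem intervalIntegrable_v (h : IsIntegralSolution L a u v) (hc : c ∈ Icc 0 L)
    (hint : IntervalIntegrable (fun t => a t * u t) volume 0 c) :
    IntervalIntegrable v volume 0 c :=
  (h.absolutelyContinuousOnInterval_v hc hint).continuousOn.intervalIntegrable

theorem absolutelyContinuousOnInterval_u (h : IsIntegralSolution L a u v) (hc : c ∈ Icc 0 L)
    (hint : IntervalIntegrable (fun t => a t * u t) volume 0 c) :
    AbsolutelyContinuousOnInterval u 0 c :=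
  .of_eqOn_add_integral (h.intervalIntegrable_v hc hint) (h.eqOn_u hc)

theorem continuousOn_Ioo (h : IsIntegralSolution L a u v) (hp : 0 ≤ p) (hq : q ≤ L)
    (hv₀ : ∀ x ∈ Ioo p q, v x ≠ 0) : ContinuousOn u (Ioo p q) ∧ ContinuousOn v (Ioo p q) := by
  suffices ∀ x ∈ Ioo p q, ContinuousAt u x ∧ ContinuousAt v x from
    ⟨fun x hx => (this x hx).1.continuousWithinAt, fun x hx => (this x hx).2.continuousWithinAt⟩
  intro x hx
  have hc : (x + q) / 2 ∈ Ioo p q := ⟨by linarith [hx.1, hx.2], by linarith [hx.2]⟩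
  have hcI : (x + q) / 2 ∈ Icc 0 L := ⟨by linarith [hc.1], by linarith [hc.2]⟩
  have hint := h.intervalIntegrable_of_ne_zero hcI (hv₀ _ hc)
  have hnhds : uIcc 0 ((x + q) / 2) ∈ 𝓝 x := by
    rw [uIcc_of_le hcI.1]
    exact Icc_mem_nhds (by linarith [hx.1]) (by linarith [hx.2])
  exact ⟨(h.absolutelyContinuousOnInterval_u hcI hint).continuousOn.continuousAt hnhds,
    (h.absolutelyContinuousOnInterval_v hcI hint).continuousOn.continuousAt hnhds⟩

theorem v_pos (h : IsIntegralSolution L a u v) (hp : 0 ≤ p) (hq : q ≤ L) (hup : u p = 0)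
    (hu₀ : ∀ x ∈ Ioo p q, 0 < u x) (hv₀ : ∀ x ∈ Ioo p q, v x ≠ 0) :
    ∀ x ∈ Ioo p q, 0 < v x := by
  intro x hx
  refine ((h.continuousOn_Ioo hp hq hv₀).2.pos_or_neg_of_ne_zero isPreconnected_Ioo hv₀).elim
    (fun hpos => hpos x hx) fun hneg => absurd (hu₀ x hx) (not_lt.2 ?_)
  have hxI : x ∈ Icc 0 L := ⟨hp.trans hx.1.le, hx.2.le.trans hq⟩
  have hvi := h.intervalIntegrable_v hxI (h.intervalIntegrable_of_ne_zero hxI (hv₀ x hx))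
  have hpI : p ∈ Icc 0 L := ⟨hp, hx.1.le.trans hxI.2⟩
  have hpx : p ∈ uIcc 0 x := mem_uIcc_of_le hp hx.1.le
  have hux : u x - u p = ∫ t in p..x, v t := by
    have := integral_interval_sub_left hvi (hvi.mono_set (uIcc_subset_uIcc left_mem_uIcc hpx))
    linarith [h.1 x hxI, h.1 p hpI]
  have hneg_int : ∫ t in p..x, v t < 0 := by
    have := intervalIntegral_pos_of_pos_on
      (hvi.mono_set (uIcc_subset_uIcc hpx right_mem_uIcc)).neg
      (fun t ht => neg_pos.2 (hneg t ⟨ht.1, ht.2.trans hx.2⟩)) hx.1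
    simpa only [Pi.neg_apply, intervalIntegral.integral_neg, neg_pos] using this
  linarith

theorem intervalIntegrable_mul_of_pos (h : IsIntegralSolution L a u v) (hp : 0 ≤ p)
    (hpq : p < q) (hq : q ≤ L) (ha₀ : ∀ᵐ x ∂volume.restrict (Ioo p q), 0 ≤ a x)
    (hu₀ : ∀ x ∈ Ioo p q, 0 < u x) (hv₀ : ∀ x ∈ Ioo p q, 0 < v x) :
    IntervalIntegrable (fun t => a t * u t) volume 0 q := by
  have hIcc : ∀ c ∈ Ioo p q, c ∈ Icc 0 L := fun c hc => ⟨hp.trans hc.1.le, hc.2.le.trans hq⟩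
  have hint : ∀ c ∈ Ioo p q, IntervalIntegrable (fun t => a t * u t) volume 0 c :=
    fun c hc => h.intervalIntegrable_of_ne_zero (hIcc c hc) (hv₀ c hc).ne'
  obtain ⟨c₀, hc₀⟩ := nonempty_Ioo.2 hpq
  have hp0 : p ∈ uIcc 0 c₀ := mem_uIcc_of_le hp hc₀.1.le
  have h0p := (hint c₀ hc₀).mono_set (uIcc_subset_uIcc left_mem_uIcc hp0)
  refine h0p.trans (intervalIntegrable_of_nonneg_of_integral_le hpq (I := v p)
    (fun c hc => h0p.symm.trans (hint c hc)) ?_ fun c hc => ?_)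
  · filter_upwards [ha₀, ae_restrict_mem measurableSet_Ioo] with x hax hx
    exact mul_nonneg hax (hu₀ x hx).le
  · have := integral_interval_sub_left (hint c hc) h0p
    linarith [h.2 c (hIcc c hc), h.2 p ⟨hp, hpq.le.trans hq⟩, hv₀ c hc]

theorem integral_sub_mul_sin_eq_zero (h : IsIntegralSolution L a u v) {k : ℝ} (hp : 0 ≤ p)
    (hpq : p ≤ q) (hq : q ≤ L) (hint : IntervalIntegrable (fun t => a t * u t) volume 0 q)
    (hup : u p = 0) (hvq : v q = 0) (hk : cos (k * (q - p)) = 0) :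
    ∫ x in p..q, (a x * u x - k ^ 2 * u x) * sin (k * (x - p)) = 0 := by
  have hqI : q ∈ Icc 0 L := ⟨hp.trans hpq, hq⟩
  have hsub : uIcc p q ⊆ uIcc 0 q := uIcc_subset_uIcc (mem_uIcc_of_le hp hpq) right_mem_uIcc
  have hIoo : ∀ x ∈ Ioo p q, x ∈ Ioo 0 q := fun x hx => ⟨hp.trans_lt hx.1, hx.2⟩
  rw [integral_mul_eq_wronskian_sub (w := fun x => a x * u x) hpq
    ((h.absolutelyContinuousOnInterval_u hqI hint).mono hsub)
    ((h.absolutelyContinuousOnInterval_v hqI hint).mono hsub)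
    ((ae_hasDerivAt_of_eqOn_add_integral (h.intervalIntegrable_v hqI hint) (h.eqOn_u hqI)).mono
      fun x hx hxpq => hx (hIoo x hxpq))
    ((ae_hasDerivAt_of_eqOn_add_integral hint.neg (h.eqOn_v hqI)).mono
      fun x hx hxpq => hx (hIoo x hxpq))
    (hasDerivAt_sin_mul_sub k p) (hasDerivAt_mul_cos_mul_sub k p)]
  simp [hup, hvq, hk]

theorem gap_le_of_pos (h : IsIntegralSolution L a u v) {n : ℕ} (hn : 1 ≤ n)
    (ha : ∀ᵐ x ∂(volume.restrict (Ioo 0 L)), (n : ℝ) ^ 2 * π ^ 2 / L ^ 2 ≤ a x)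
    (hpq : p < q) (hp : p ∈ Icc 0 L) (hq : q ∈ Icc 0 L) (hup : u p = 0) (hvq : v q = 0)
    (hu₀ : ∀ x ∈ Ioo p q, 0 < u x) (hv₀ : ∀ x ∈ Ioo p q, v x ≠ 0) :
    q - p ≤ L / (2 * n) := by
  by_contra! hgap
  set k := π / (2 * (q - p))
  have hk : k ^ 2 < n ^ 2 * π ^ 2 / L ^ 2 :=
    sq_pi_div_two_mul_lt (by linarith [hp.1, hq.2]) hn hgap
  have hak : ∀ᵐ x ∂volume.restrict (Ioo p q), k ^ 2 < a x :=
    (ae_restrict_of_ae_restrict_of_subset (Ioo_subset_Ioo hp.1 hq.2) ha).mono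
      fun x hx => hk.trans_le hx
  have hint := h.intervalIntegrable_mul_of_pos hp.1 hpq hq.2
    (hak.mono fun x hx => (sq_nonneg k).trans hx.le) hu₀ (h.v_pos hp.1 hq.2 hup hu₀ hv₀)
  have hqp : q - p ≠ 0 := (sub_pos.2 hpq).ne'
  have horth := h.integral_sub_mul_sin_eq_zero (k := k) hp.1 hpq.le hq.2 hint hup hvq
    (by rw [show k * (q - p) = π / 2 by simp only [k]; field_simp, cos_pi_div_two])
  have hsub : uIcc p q ⊆ uIcc 0 q := uIcc_subset_uIcc (mem_uIcc_of_le hp.1 hpq.le) right_mem_uIcc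
  have hui : IntervalIntegrable u volume p q :=
    ((h.absolutelyContinuousOnInterval_u hq hint).mono hsub).continuousOn.intervalIntegrable
  refine horth.not_gt (intervalIntegral_pos_of_ae_pos hpq
    (((hint.mono_set hsub).sub (hui.const_mul _)).mul_continuousOn (by fun_prop)) ?_)
  filter_upwards [hak, ae_restrict_mem measurableSet_Ioo] with x hax hx
  rw [← sub_mul]
  exact mul_pos (mul_pos (sub_pos.2 hax) (hu₀ x hx)) (sin_pi_div_two_mul_sub_pos hx)

end IsIntegralSolution

theorem gap_between_zeros_le_general (L : ℝ) (n : ℕ) (hn : 1 ≤ n)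
    (a u v : ℝ → ℝ)
    (hprec₁ : ∀ᵐ x ∂(volume.restrict (Ioo 0 L)), (n : ℝ) ^ 2 * π ^ 2 / L ^ 2 ≤ a x)
    (hu : ∀ x ∈ Icc (0:ℝ) L, u x = u 0 + ∫ t in (0:ℝ)..x, v t)
    (hv : ∀ x ∈ Icc (0:ℝ) L, v x = - ∫ t in (0:ℝ)..x, a t * u t)
    (xi xj : ℝ) (hxij : xi < xj) (hxi : xi ∈ Icc (0:ℝ) L) (hxj : xj ∈ Icc (0:ℝ) L)
    (huxi : u xi = 0) (hvxj : v xj = 0)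
    (hnozero : ∀ x ∈ Ioo xi xj, u x ≠ 0 ∧ v x ≠ 0) :
    xj - xi ≤ L / (2 * n) := by
  have h : IsIntegralSolution L a u v := ⟨hu, hv⟩
  have hv₀ : ∀ x ∈ Ioo xi xj, v x ≠ 0 := fun x hx => (hnozero x hx).2
  rcases (h.continuousOn_Ioo hxi.1 hxj.2 hv₀).1.pos_or_neg_of_ne_zero isPreconnected_Ioo
    (fun x hx => (hnozero x hx).1) with hpos | hneg
  · exact h.gap_le_of_pos hn hprec₁ hxij hxi hxj huxi hvxj hpos hv₀
  · exact h.neg.gap_le_of_pos hn hprec₁ hxij hxi hxj (by simp [huxi]) (by simp [hvxj])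
      (fun x hx => neg_pos.2 (hneg x hx)) fun x hx => neg_ne_zero.2 (hv₀ x hx)

/-- if λₙ ≺ a, u is a nontrivial solution of the Neumann problem
u'' + au = 0, u'(0) = u'(L) = 0 (encoded in integral form, v being u'), and
x_i < x_{i+1} are a zero of u and a zero of u' respectively with no zeros of u or u'
in between, then x_{i+1} - x_i ≤ L/(2n). -/
theorem gap_between_zeros_le (L : ℝ) (hL : 0 < L) (n : ℕ) (hn : 1 ≤ n)
    (a u v : ℝ → ℝ)
    (ha : IntegrableOn a (Ioo 0 L))
    (hprec₁ : ∀ᵐ x ∂(volume.restrict (Ioo 0 L)), (n : ℝ) ^ 2 * π ^ 2 / L ^ 2 ≤ a x)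
    (hprec₂ : 0 < volume (Ioo 0 L ∩ {x | (n : ℝ) ^ 2 * π ^ 2 / L ^ 2 < a x}))
    (hu : ∀ x ∈ Icc (0:ℝ) L, u x = u 0 + ∫ t in (0:ℝ)..x, v t)
    (hv : ∀ x ∈ Icc (0:ℝ) L, v x = - ∫ t in (0:ℝ)..x, a t * u t)
    (hvL : v L = 0)
    (hnontriv : ∃ x ∈ Icc (0:ℝ) L, u x ≠ 0)
    (xi xj : ℝ) (hxij : xi < xj) (hxi : xi ∈ Icc (0:ℝ) L) (hxj : xj ∈ Icc (0:ℝ) L)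
    (huxi : u xi = 0) (hvxj : v xj = 0)
    (hnozero : ∀ x ∈ Ioo xi xj, u x ≠ 0 ∧ v x ≠ 0) :
    xj - xi ≤ L / (2 * n) :=
  gap_between_zeros_le_general L n hn a u v hprec₁ hu hv xi xj hxij hxi hxj huxi hvxj hnozero
end

section
/- Let L > 0, n ≥ 1, λₙ = n²π²/L², and a ∈ L¹(0,L) with λₙ ≺ a (i.e., a ≥ λₙ a.e. with strict inequality on a set of positive measure). If u is a nontrivial solution of u'' + au = 0, u'(0) = u'(L) = 0, and the zeros of u' in [0,L] are 0 = x₀ < x₂ < … < x_{2m} = L with the zeros of u interlacing as x₁ < x₃ < … < x_{2m-1}, then m ≥ n + 1. -/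
/-!
Between consecutive points `x i < x (i + 1)`, `u'` vanishes at one end, `u` at the other, and `u`
has no zero in between. Comparing `u` with `cos (r (t - c))`, `r = n π / L`, `c` the end where `u'`
vanishes, the Wronskian of the two is monotone because `a ≥ r ^ 2`; this gives
`r (x (i + 1) - x i) ≤ π / 2`, strictly on a gap where `a > r ^ 2` on a set of positive measure.
Summing over the `2 m` gaps gives `n π = r L < m π`.

The hypothesis on `v` says nothing where `a u` fails to be integrable (the integral is then `0`).
Since `v` has finitely many zeros, `a u` is integrable on `[0, b]` for every `b < L`; near `L`,
where `∫ |a|` is small, a Gronwall-type bound keeps `u` bounded, so `a u` is integrable on `[0, L]`.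
-/

open MeasureTheory Real Set intervalIntegral

theorem integral_interval_eq_sub_of_mem_Icc {f : ℝ → ℝ} {α β s t : ℝ}
    (hf : IntervalIntegrable f volume α β) (hs : s ∈ Icc α β) (ht : t ∈ Icc α β) :
    ∫ x in s..t, f x = (∫ x in α..t, f x) - ∫ x in α..s, f x :=
  (integral_interval_sub_left
    (hf.mono_set (uIcc_subset_uIcc left_mem_uIcc (mem_uIcc_of_le ht.1 ht.2)))
    (hf.mono_set (uIcc_subset_uIcc left_mem_uIcc (mem_uIcc_of_le hs.1 hs.2)))).symm

/-- Hill's equation `U'' + k U = 0` on `[α, β]`, as the system `U' = V`, `V' = -k U` in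
integrated form. -/
structure IsHillSolutionOn (k U V : ℝ → ℝ) (α β : ℝ) : Prop where
  le : α ≤ β
  intervalIntegrable : IntervalIntegrable (fun t => k t * U t) volume α β
  eq_add_integral : ∀ t ∈ Icc α β, U t = U α + ∫ s in α..t, V s
  eq_sub_integral : ∀ t ∈ Icc α β, V t = V α - ∫ s in α..t, k s * U s

namespace IsHillSolutionOn

variable {k U V : ℝ → ℝ} {α β : ℝ}

theorem continuousOn_V (h : IsHillSolutionOn k U V α β) : ContinuousOn V (Icc α β) := by
  rw [← uIcc_of_le h.le]
  exact (continuousOn_const.sub (continuousOn_primitive_interval' h.intervalIntegrable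
    left_mem_uIcc)).congr fun t ht => h.eq_sub_integral t (uIcc_of_le h.le ▸ ht)

theorem intervalIntegrable_V (h : IsHillSolutionOn k U V α β) :
    IntervalIntegrable V volume α β :=
  h.continuousOn_V.intervalIntegrable_of_Icc h.le

theorem continuousOn_U (h : IsHillSolutionOn k U V α β) : ContinuousOn U (Icc α β) := by
  rw [← uIcc_of_le h.le]
  exact (continuousOn_const.add (continuousOn_primitive_interval' h.intervalIntegrable_V
    left_mem_uIcc)).congr fun t ht => h.eq_add_integral t (uIcc_of_le h.le ▸ ht)

theorem mono (h : IsHillSolutionOn k U V α β) {s t : ℝ} (hs : α ≤ s) (hst : s ≤ t)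
    (ht : t ≤ β) : IsHillSolutionOn k U V s t := by
  have hsub : Icc s t ⊆ Icc α β := Icc_subset_Icc hs ht
  have hsα : s ∈ Icc α β := hsub (left_mem_Icc.2 hst)
  refine ⟨hst, h.intervalIntegrable.mono_set ?_, fun τ hτ => ?_, fun τ hτ => ?_⟩
  · simpa only [uIcc_of_le hst, uIcc_of_le h.le] using hsub
  · rw [h.eq_add_integral τ (hsub hτ), h.eq_add_integral s hsα,
      integral_interval_eq_sub_of_mem_Icc h.intervalIntegrable_V hsα (hsub hτ)]
    ring
  · rw [h.eq_sub_integral τ (hsub hτ), h.eq_sub_integral s hsα,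
      integral_interval_eq_sub_of_mem_Icc h.intervalIntegrable hsα (hsub hτ)]
    ring

theorem neg (h : IsHillSolutionOn k U V α β) :
    IsHillSolutionOn k (fun t => -U t) (fun t => -V t) α β where
  le := h.le
  intervalIntegrable := by simp only [mul_neg]; exact h.intervalIntegrable.neg
  eq_add_integral t ht := by rw [h.eq_add_integral t ht, intervalIntegral.integral_neg]; ring
  eq_sub_integral t ht := by
    simp only [mul_neg, intervalIntegral.integral_neg]
    rw [h.eq_sub_integral t ht]; ring

theorem abs_U_le (h : IsHillSolutionOn k U V α β) (hk : IntervalIntegrable k volume α β)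
    (hsmall : (β - α) * ∫ t in α..β, |k t| ≤ 1 / 2) {t : ℝ} (ht : t ∈ Icc α β) :
    |U t| ≤ 2 * (|U α| + (β - α) * |V α|) := by
  obtain ⟨p, hp, hmax⟩ :=
    isCompact_Icc.exists_isMaxOn (nonempty_Icc.2 h.le) h.continuousOn_U.abs
  set M := |U p|
  have hM : 0 ≤ M := abs_nonneg _
  have hK : 0 ≤ ∫ t in α..β, |k t| := integral_nonneg h.le fun _ _ => abs_nonneg _
  have hV : ∀ τ ∈ Icc α β, |V τ| ≤ |V α| + M * ∫ t in α..β, |k t| := by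
    intro τ hτ
    have hkU : ∫ s in α..τ, |k s * U s| ≤ M * ∫ t in α..β, |k t| := calc
      ∫ s in α..τ, |k s * U s| ≤ ∫ s in α..β, |k s * U s| :=
        integral_mono_interval le_rfl hτ.1 hτ.2 (ae_of_all _ fun _ => abs_nonneg _)
          h.intervalIntegrable.abs
      _ ≤ ∫ s in α..β, M * |k s| := by
        refine integral_mono_on h.le h.intervalIntegrable.abs (hk.abs.const_mul M) fun s hs => ?_
        rw [abs_mul, mul_comm]
        exact mul_le_mul_of_nonneg_right (hmax hs) (abs_nonneg _)
      _ = M * ∫ t in α..β, |k t| := integral_const_mul _ _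
    rw [h.eq_sub_integral τ hτ]
    linarith [abs_sub (V α) (∫ s in α..τ, k s * U s), abs_integral_le_integral_abs
      (f := fun s => k s * U s) (μ := volume) hτ.1]
  have hU : ∀ τ ∈ Icc α β, |U τ| ≤ |U α| + (β - α) * (|V α| + M * ∫ t in α..β, |k t|) := by
    intro τ hτ
    have := norm_integral_le_of_norm_le_const (a := α) (b := τ) (f := V) fun s hs => by
      rw [uIoc_of_le hτ.1] at hs
      exact hV s ⟨hs.1.le, hs.2.trans hτ.2⟩
    rw [Real.norm_eq_abs, abs_of_nonneg (sub_nonneg.2 hτ.1)] at this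
    rw [h.eq_add_integral τ hτ]
    have hC : 0 ≤ |V α| + M * ∫ t in α..β, |k t| := by positivity
    linarith [abs_add_le (U α) (∫ s in α..τ, V s),
      mul_le_mul_of_nonneg_left (by linarith [hτ.2] : τ - α ≤ β - α) hC]
  have hUt : |U t| ≤ M := hmax ht
  nlinarith [hU p hp, mul_le_mul_of_nonneg_left hsmall hM]

end IsHillSolutionOn

open Topology in
theorem exists_mul_integral_abs_le_half {k : ℝ → ℝ} {α β : ℝ} (hαβ : α < β)
    (hk : IntervalIntegrable k volume α β) :
    ∃ t₀ ∈ Ioo α β, (β - α) * ∫ t in t₀..β, |k t| ≤ 1 / 2 := by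
  have hkI := (intervalIntegrable_iff_integrableOn_Icc_of_le hαβ.le).1 hk.abs
  rw [← uIcc_of_le hαβ.le] at hkI
  have hcont := continuousOn_primitive_interval_left hkI
  rw [uIcc_of_le hαβ.le] at hcont
  have htend : Filter.Tendsto (fun t => (β - α) * ∫ s in t..β, |k s|) (𝓝[<] β) (𝓝 0) := by
    have := ((hcont β (right_mem_Icc.2 hαβ.le)).mono Ioo_subset_Icc_self).tendsto.const_mul (β - α)
    rwa [nhdsWithin_Ioo_eq_nhdsLT hαβ, integral_same, mul_zero] at this
  obtain ⟨t₀, ht₀, hIoo⟩ := ((htend.eventually (ge_mem_nhds (by norm_num : (0:ℝ) < 1 / 2))).and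
    (Ioo_mem_nhdsLT hαβ)).exists
  exact ⟨t₀, hIoo, ht₀⟩

theorem continuousOn_Ico_of_forall_lt {U : ℝ → ℝ} {α β : ℝ}
    (h : ∀ b ∈ Ico α β, ContinuousOn U (Icc α b)) : ContinuousOn U (Ico α β) := fun t ht =>
  (h ((t + β) / 2) ⟨by linarith [ht.1, ht.2], by linarith [ht.2]⟩ t
    ⟨ht.1, by linarith [ht.2]⟩).mono_of_mem_nhdsWithin
    (mem_nhdsWithin.2 ⟨Iio ((t + β) / 2), isOpen_Iio, by simp; linarith [ht.2],
      fun s hs => ⟨hs.2.1, hs.1.le⟩⟩)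

theorem intervalIntegrable_mul_of_forall_lt {k U V : ℝ → ℝ} {α β : ℝ} (hαβ : α < β)
    (hk : IntervalIntegrable k volume α β) (h : ∀ b ∈ Ico α β, IsHillSolutionOn k U V α b) :
    IntervalIntegrable (fun t => k t * U t) volume α β := by
  obtain ⟨t₀, ht₀, hsmall⟩ := exists_mul_integral_abs_le_half hαβ hk
  have hk₀ : IntervalIntegrable k volume t₀ β :=
    hk.mono_set (uIcc_subset_uIcc (by simp [uIcc_of_le hαβ.le, ht₀.1.le, ht₀.2.le]) right_mem_uIcc)
  have hbound : ∀ t ∈ Ico t₀ β, |U t| ≤ 2 * (|U t₀| + (β - α) * |V t₀|) := by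
    intro t ht
    have hsol := (h t ⟨ht₀.1.le.trans ht.1, ht.2⟩).mono ht₀.1.le ht.1 le_rfl
    have hkt : IntervalIntegrable k volume t₀ t :=
      hk₀.mono_set (uIcc_subset_uIcc left_mem_uIcc (by simp [uIcc_of_le ht₀.2.le, ht.1, ht.2.le]))
    have hsmall' : (t - t₀) * ∫ s in t₀..t, |k s| ≤ 1 / 2 :=
      (mul_le_mul (by linarith [ht₀.1, ht.2]) (integral_mono_interval le_rfl ht.1 ht.2.le
        (ae_of_all _ fun _ => abs_nonneg _) hk₀.abs) (integral_nonneg ht.1 fun _ _ => abs_nonneg _)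
        (by linarith [ht₀.2])).trans hsmall
    linarith [hsol.abs_U_le hkt hsmall' (right_mem_Icc.2 ht.1), mul_le_mul_of_nonneg_right
      (show t - t₀ ≤ β - α by linarith [ht₀.1, ht.2]) (abs_nonneg (V t₀))]
  have hcont : ContinuousOn U (Ico α β) :=
    continuousOn_Ico_of_forall_lt fun b hb => (h b hb).continuousOn_U
  have htail : IntegrableOn (fun t => k t * U t) (Ioo t₀ β) := by
    have hkI := (intervalIntegrable_iff_integrableOn_Ioo_of_le ht₀.2.le).1 hk₀
    refine Integrable.mono' (hkI.norm.mul_const (2 * (|U t₀| + (β - α) * |V t₀|)))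
      (hkI.aestronglyMeasurable.mul ((hcont.mono fun t ht => ⟨ht₀.1.le.trans ht.1.le, ht.2⟩)
        |>.aestronglyMeasurable measurableSet_Ioo)) ?_
    filter_upwards [ae_restrict_mem measurableSet_Ioo] with t ht
    rw [norm_mul, Real.norm_eq_abs, Real.norm_eq_abs]
    exact mul_le_mul_of_nonneg_left (hbound t ⟨ht.1.le, ht.2⟩) (abs_nonneg _)
  exact (h t₀ ⟨ht₀.1.le, ht₀.2⟩).intervalIntegrable.trans
    ((intervalIntegrable_iff_integrableOn_Ioo_of_le ht₀.2.le).2 htail)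

theorem IsHillSolutionOn.of_finite_zeros {k U V : ℝ → ℝ} {α β : ℝ} (hαβ : α < β)
    (hk : IntervalIntegrable k volume α β)
    (hU : ∀ t ∈ Icc α β, U t = U α + ∫ s in α..t, V s)
    (hV : ∀ t ∈ Icc α β, V t = -∫ s in α..t, k s * U s)
    (hfin : {t ∈ Icc α β | V t = 0}.Finite) : IsHillSolutionOn k U V α β := by
  have hVα : V α = 0 := by simpa using hV α (left_mem_Icc.2 hαβ.le)
  have hloc : ∀ b ∈ Ico α β, IntervalIntegrable (fun t => k t * U t) volume α b := by
    intro b hb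
    by_contra hint
    refine (Icc_infinite hb.2).mono ?_ hfin
    intro t ht
    refine ⟨⟨hb.1.trans ht.1, ht.2⟩, ?_⟩
    rw [hV t ⟨hb.1.trans ht.1, ht.2⟩, integral_undef fun h => hint (h.mono_set ?_), neg_zero]
    simpa [uIcc_of_le hb.1, uIcc_of_le (hb.1.trans ht.1)] using Icc_subset_Icc_right ht.1
  have hsol : ∀ b ∈ Ico α β, IsHillSolutionOn k U V α b := fun b hb =>
    ⟨hb.1, hloc b hb, fun t ht => hU t ⟨ht.1, ht.2.trans hb.2.le⟩,
      fun t ht => by rw [hV t ⟨ht.1, ht.2.trans hb.2.le⟩, hVα, zero_sub]⟩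
  exact ⟨hαβ.le, intervalIntegrable_mul_of_forall_lt hαβ hk hsol, hU,
    fun t ht => by rw [hV t ht, hVα, zero_sub]⟩

theorem IsPreconnected.forall_pos_or_forall_neg {f : ℝ → ℝ} {s : Set ℝ} (hs : IsPreconnected s)
    (hf : ContinuousOn f s) (h0 : ∀ t ∈ s, f t ≠ 0) :
    (∀ t ∈ s, 0 < f t) ∨ (∀ t ∈ s, f t < 0) := by
  by_contra! ⟨⟨a, ha, hfa⟩, b, hb, hfb⟩
  obtain ⟨t, ht, hft⟩ := hs.intermediate_value ha hb hf ⟨hfa, hfb⟩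
  exact h0 t ht hft

theorem cos_mul_sub_pos {r α β c t : ℝ} (hr : 0 < r) (hc : c ∈ Icc α β)
    (hπ : r * (β - α) ≤ π / 2) (ht : t ∈ Ioo α β) : 0 < cos (r * (t - c)) := by
  apply cos_pos_of_mem_Ioo
  constructor <;> nlinarith [ht.1, ht.2, hc.1, hc.2]

theorem ae_nonneg_comparison_integrand {k U : ℝ → ℝ} {r α β c : ℝ} (hr : 0 < r) (hc : c ∈ Icc α β)
    (hπ : r * (β - α) ≤ π / 2) (hk : ∀ᵐ t ∂volume.restrict (Ioo α β), r ^ 2 ≤ k t)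
    (hU : ∀ t ∈ Ioo α β, 0 < U t) :
    0 ≤ᵐ[volume.restrict (Ioo α β)] fun t => (k t - r ^ 2) * U t * cos (r * (t - c)) := by
  filter_upwards [hk, ae_restrict_mem measurableSet_Ioo] with t hkt ht
  exact mul_nonneg (mul_nonneg (sub_nonneg.2 hkt) (hU t ht).le) (cos_mul_sub_pos hr hc hπ ht).le

/-- Minus the Wronskian of `U` and `cos (r (· - c))`, with `V` in the role of `U'`. -/
noncomputable def wronskianCos (r c : ℝ) (U V : ℝ → ℝ) (t : ℝ) : ℝ :=
  V t * cos (r * (t - c)) + r * U t * sin (r * (t - c))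

namespace IsHillSolutionOn

variable {k U V : ℝ → ℝ} {α β : ℝ}

theorem wronskianCos_sub_eq_integral (h : IsHillSolutionOn k U V α β) (r c : ℝ) :
    wronskianCos r c U V α - wronskianCos r c U V β =
      ∫ t in α..β, (k t - r ^ 2) * U t * cos (r * (t - c)) := by
  -- `U` and `V` rewritten through the integral equations, so that `W` is absolutely continuous
  set U₁ : ℝ → ℝ := fun t => U α + ∫ s in α..t, V s
  set V₁ : ℝ → ℝ := fun t => V α - ∫ s in α..t, k s * U s
  set W : ℝ → ℝ := fun t => V₁ t * cos (r * (t - c)) + r * U₁ t * sin (r * (t - c))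
  have hW : ∀ t ∈ Icc α β, wronskianCos r c U V t = W t := fun t ht => by
    simp only [wronskianCos, W, U₁, V₁, ← h.eq_add_integral t ht, ← h.eq_sub_integral t ht]
  have hac : AbsolutelyContinuousOnInterval W α β := by
    have hcst (C : ℝ) : AbsolutelyContinuousOnInterval (fun _ => C) α β :=
      (LipschitzWith.const C).lipschitzOnWith.absolutelyContinuousOnInterval
    have hcos : AbsolutelyContinuousOnInterval (fun t => cos (r * (t - c))) α β :=
      (by fun_prop : ContDiff ℝ 1 fun t => cos (r * (t - c))).contDiffOn
        |>.absolutelyContinuousOnInterval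
    have hsin : AbsolutelyContinuousOnInterval (fun t => sin (r * (t - c))) α β :=
      (by fun_prop : ContDiff ℝ 1 fun t => sin (r * (t - c))).contDiffOn
        |>.absolutelyContinuousOnInterval
    have hU₁ := (hcst (U α)).add
      (h.intervalIntegrable_V.absolutelyContinuousOnInterval_intervalIntegral left_mem_uIcc)
    have hV₁ := (hcst (V α)).sub
      (h.intervalIntegrable.absolutelyContinuousOnInterval_intervalIntegral left_mem_uIcc)
    exact (hV₁.fun_mul hcos).add (((hcst r).fun_mul hU₁).fun_mul hsin)
  have hderiv : ∀ᵐ t, t ∈ uIoc α β → deriv W t = -((k t - r ^ 2) * U t * cos (r * (t - c))) := by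
    filter_upwards [h.intervalIntegrable_V.ae_hasDerivAt_integral,
      h.intervalIntegrable.ae_hasDerivAt_integral] with t hV hkU ht
    rw [uIoc_of_le h.le] at ht
    have ht' : t ∈ Icc α β := Ioc_subset_Icc_self ht
    have htu : t ∈ uIcc α β := by rwa [uIcc_of_le h.le]
    have hlin : HasDerivAt (fun t => r * (t - c)) r t := by
      simpa using ((hasDerivAt_id t).sub_const c).const_mul r
    have hd : HasDerivAt W _ t := ((((hkU htu α left_mem_uIcc).const_sub (V α)).mul hlin.cos).add
      ((((hV htu α left_mem_uIcc).const_add (U α)).const_mul r).mul hlin.sin))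
    rw [hd.deriv, ← h.eq_add_integral t ht', ← h.eq_sub_integral t ht']
    ring
  rw [hW β (right_mem_Icc.2 h.le), hW α (left_mem_Icc.2 h.le), ← neg_sub,
    ← hac.integral_deriv_eq_sub, integral_congr_ae hderiv, intervalIntegral.integral_neg, neg_neg]

theorem intervalIntegrable_comparison_integrand (h : IsHillSolutionOn k U V α β) (r c : ℝ) :
    IntervalIntegrable (fun t => (k t - r ^ 2) * U t * cos (r * (t - c))) volume α β := by
  have := (h.intervalIntegrable.sub ((h.continuousOn_U.intervalIntegrable_of_Icc h.le).const_mul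
    (r ^ 2))).mul_continuousOn (by fun_prop : Continuous fun t => cos (r * (t - c))).continuousOn
  convert this using 2 with t
  ring

theorem wronskianCos_le (h : IsHillSolutionOn k U V α β) {r c : ℝ} (hr : 0 < r)
    (hc : c ∈ Icc α β) (hπ : r * (β - α) ≤ π / 2)
    (hk : ∀ᵐ t ∂volume.restrict (Ioo α β), r ^ 2 ≤ k t) (hU : ∀ t ∈ Ioo α β, 0 < U t) :
    wronskianCos r c U V β ≤ wronskianCos r c U V α := by
  rw [← sub_nonneg, h.wronskianCos_sub_eq_integral]
  exact integral_nonneg_of_ae_restrict h.le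
    ((ae_restrict_congr_set Ioo_ae_eq_Icc).1 (ae_nonneg_comparison_integrand hr hc hπ hk hU))

theorem wronskianCos_lt (h : IsHillSolutionOn k U V α β) {r c : ℝ} (hr : 0 < r)
    (hc : c ∈ Icc α β) (hπ : r * (β - α) ≤ π / 2)
    (hk : ∀ᵐ t ∂volume.restrict (Ioo α β), r ^ 2 ≤ k t) (hU : ∀ t ∈ Ioo α β, 0 < U t)
    (hpos : 0 < volume (Ioo α β ∩ {t | r ^ 2 < k t})) :
    wronskianCos r c U V β < wronskianCos r c U V α := by
  have hf := (ae_restrict_congr_set Ioo_ae_eq_Ioc).1 (ae_nonneg_comparison_integrand hr hc hπ hk hU)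
  rw [← uIoc_of_le h.le] at hf
  rw [← sub_pos, h.wronskianCos_sub_eq_integral,
    integral_pos_iff_support_of_nonneg_ae' hf (h.intervalIntegrable_comparison_integrand r c)]
  refine ⟨nonempty_Ioo.1 ((nonempty_of_measure_ne_zero hpos.ne').mono inter_subset_left),
    hpos.trans_le (measure_mono ?_)⟩
  rintro t ⟨ht, hkt⟩
  exact ⟨(mul_pos (mul_pos (sub_pos.2 hkt) (hU t ht)) (cos_mul_sub_pos hr hc hπ ht)).ne',
    Ioo_subset_Ioc_self ht⟩

theorem neumann_dirichlet_gap_of_pos (h : IsHillSolutionOn k U V α β) {r : ℝ} (hr : 0 < r)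
    (hk : ∀ᵐ t ∂volume.restrict (Ioo α β), r ^ 2 ≤ k t) (hVα : V α = 0) (hUβ : U β = 0)
    (hU : ∀ t ∈ Ico α β, 0 < U t) :
    r * (β - α) ≤ π / 2 ∧
      (0 < volume (Ioo α β ∩ {t | r ^ 2 < k t}) → r * (β - α) < π / 2) := by
  have hle : r * (β - α) ≤ π / 2 := by
    by_contra! hlt
    set γ := α + π / 2 / r
    have hγ : r * (γ - α) = π / 2 := by simp only [γ]; field_simp; ring
    have hαγ : α < γ := by simp only [γ]; linarith [div_pos pi_div_two_pos hr]
    have hγβ : γ < β := by nlinarith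
    have := (h.mono le_rfl hαγ.le hγβ.le).wronskianCos_le hr (left_mem_Icc.2 hαγ.le) hγ.le
      (ae_restrict_of_ae_restrict_of_subset (Ioo_subset_Ioo_right hγβ.le) hk)
      (fun t ht => hU t ⟨ht.1.le, ht.2.trans hγβ⟩)
    simp only [wronskianCos, hγ, hVα, sub_self, mul_zero, sin_zero, zero_mul,
      cos_pi_div_two, sin_pi_div_two] at this
    nlinarith [hU γ ⟨hαγ.le, hγβ⟩]
  refine ⟨hle, fun hpos => hle.lt_of_ne fun heq => ?_⟩
  have := h.wronskianCos_lt hr (left_mem_Icc.2 h.le) hle hk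
    (fun t ht => hU t (Ioo_subset_Ico_self ht)) hpos
  simp [wronskianCos, heq, hUβ, hVα] at this

theorem dirichlet_neumann_gap_of_pos (h : IsHillSolutionOn k U V α β) {r : ℝ} (hr : 0 < r)
    (hk : ∀ᵐ t ∂volume.restrict (Ioo α β), r ^ 2 ≤ k t) (hUα : U α = 0) (hVβ : V β = 0)
    (hU : ∀ t ∈ Ioc α β, 0 < U t) :
    r * (β - α) ≤ π / 2 ∧
      (0 < volume (Ioo α β ∩ {t | r ^ 2 < k t}) → r * (β - α) < π / 2) := by
  have hle : r * (β - α) ≤ π / 2 := by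
    by_contra! hlt
    set γ := β - π / 2 / r
    have hγ : r * (γ - β) = -(π / 2) := by simp only [γ]; field_simp; ring
    have hγβ : γ < β := by simp only [γ]; linarith [div_pos pi_div_two_pos hr]
    have hαγ : α < γ := by nlinarith
    have := (h.mono hαγ.le hγβ.le le_rfl).wronskianCos_le hr (right_mem_Icc.2 hγβ.le)
      (by nlinarith) (ae_restrict_of_ae_restrict_of_subset (Ioo_subset_Ioo_left hαγ.le) hk)
      (fun t ht => hU t ⟨hαγ.trans ht.1, ht.2.le⟩)
    simp only [wronskianCos, hγ, hVβ, sub_self, mul_zero, sin_zero, zero_mul, cos_neg, sin_neg,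
      cos_pi_div_two, sin_pi_div_two] at this
    nlinarith [hU γ ⟨hαγ, hγβ.le⟩]
  refine ⟨hle, fun hpos => hle.lt_of_ne fun heq => ?_⟩
  have hα : r * (α - β) = -(π / 2) := by linarith
  have := h.wronskianCos_lt hr (right_mem_Icc.2 h.le) hle hk
    (fun t ht => hU t (Ioo_subset_Ioc_self ht)) hpos
  simp [wronskianCos, hα, hUα, hVβ] at this

theorem neumann_dirichlet_gap (h : IsHillSolutionOn k U V α β) {r : ℝ} (hr : 0 < r)
    (hk : ∀ᵐ t ∂volume.restrict (Ioo α β), r ^ 2 ≤ k t) (hVα : V α = 0) (hUβ : U β = 0)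
    (hU : ∀ t ∈ Ico α β, U t ≠ 0) :
    r * (β - α) ≤ π / 2 ∧
      (0 < volume (Ioo α β ∩ {t | r ^ 2 < k t}) → r * (β - α) < π / 2) := by
  rcases isPreconnected_Ico.forall_pos_or_forall_neg (h.continuousOn_U.mono Ico_subset_Icc_self)
    hU with hpos | hneg
  · exact h.neumann_dirichlet_gap_of_pos hr hk hVα hUβ hpos
  · exact h.neg.neumann_dirichlet_gap_of_pos hr hk (by simp [hVα]) (by simp [hUβ])
      fun t ht => neg_pos.2 (hneg t ht)

theorem dirichlet_neumann_gap (h : IsHillSolutionOn k U V α β) {r : ℝ} (hr : 0 < r)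
    (hk : ∀ᵐ t ∂volume.restrict (Ioo α β), r ^ 2 ≤ k t) (hUα : U α = 0) (hVβ : V β = 0)
    (hU : ∀ t ∈ Ioc α β, U t ≠ 0) :
    r * (β - α) ≤ π / 2 ∧
      (0 < volume (Ioo α β ∩ {t | r ^ 2 < k t}) → r * (β - α) < π / 2) := by
  rcases isPreconnected_Ioc.forall_pos_or_forall_neg (h.continuousOn_U.mono Ioc_subset_Icc_self)
    hU with hpos | hneg
  · exact h.dirichlet_neumann_gap_of_pos hr hk hUα hVβ hpos
  · exact h.neg.dirichlet_neumann_gap_of_pos hr hk (by simp [hUα]) (by simp [hVβ])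
      fun t ht => neg_pos.2 (hneg t ht)

end IsHillSolutionOn

theorem StrictMonoOn.eq_of_mem_Ico {x : ℕ → ℝ} {N i j : ℕ} (hx : StrictMonoOn x (Iic N))
    (hi : i < N) (hj : j ≤ N) (h : x j ∈ Ico (x i) (x (i + 1))) : j = i := by
  have h₁ : i ≤ j := (hx.le_iff_le (show i ≤ N by omega) hj).1 h.1
  have h₂ : j < i + 1 := (hx.lt_iff_lt hj (show i + 1 ≤ N by omega)).1 h.2
  omega

theorem StrictMonoOn.eq_add_one_of_mem_Ioc {x : ℕ → ℝ} {N i j : ℕ} (hx : StrictMonoOn x (Iic N))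
    (hi : i < N) (hj : j ≤ N) (h : x j ∈ Ioc (x i) (x (i + 1))) : j = i + 1 := by
  have h₁ : i < j := (hx.lt_iff_lt (show i ≤ N by omega) hj).1 h.1
  have h₂ : j ≤ i + 1 := (hx.le_iff_le hj (show i + 1 ≤ N by omega)).1 h.2
  omega

theorem exists_measure_Ioo_inter_pos (x : ℕ → ℝ) (s : Set ℝ) {N : ℕ}
    (h : 0 < volume (Ioo (x 0) (x N) ∩ s)) :
    ∃ i < N, 0 < volume (Ioo (x i) (x (i + 1)) ∩ s) := by
  induction N with
  | zero => simp at h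
  | succ N ih =>
    by_cases hN : 0 < volume (Ioo (x 0) (x N) ∩ s)
    · obtain ⟨i, hi, hpos⟩ := ih hN
      exact ⟨i, by omega, hpos⟩
    refine ⟨N, N.lt_succ_self, ?_⟩
    have hsub : Ioo (x 0) (x (N + 1)) ∩ s ⊆
        (Ioo (x 0) (x N) ∩ s) ∪ ({x N} ∪ (Ioo (x N) (x (N + 1)) ∩ s)) := by
      rintro t ⟨ht, hts⟩
      rcases lt_trichotomy t (x N) with h | h | h
      · exact Or.inl ⟨⟨ht.1, h⟩, hts⟩
      · exact Or.inr (Or.inl h)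
      · exact Or.inr (Or.inr ⟨⟨h, ht.2⟩, hts⟩)
    have := (measure_mono (μ := volume) hsub).trans
      ((measure_union_le _ _).trans (add_le_add le_rfl (measure_union_le _ _)))
    rw [not_lt, nonpos_iff_eq_zero] at hN
    rw [hN, measure_singleton, zero_add, zero_add] at this
    exact h.trans_le this

theorem IsHillSolutionOn.gap_le_of_interlacing {k U V : ℝ → ℝ} {α β r : ℝ} {N : ℕ}
    {x : ℕ → ℝ} (h : IsHillSolutionOn k U V α β) (hr : 0 < r)
    (hk : ∀ᵐ t ∂volume.restrict (Ioo α β), r ^ 2 ≤ k t)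
    (hmono : StrictMonoOn x (Iic N)) (hrange : ∀ i ≤ N, x i ∈ Icc α β)
    (hzV : ∀ i ≤ N, Even i → V (x i) = 0) (hzU : ∀ i ≤ N, Odd i → U (x i) = 0)
    (hallU : ∀ t ∈ Icc α β, U t = 0 → ∃ i ≤ N, Odd i ∧ t = x i) {i : ℕ} (hi : i < N) :
    r * (x (i + 1) - x i) ≤ π / 2 ∧
      (0 < volume (Ioo (x i) (x (i + 1)) ∩ {t | r ^ 2 < k t}) →
        r * (x (i + 1) - x i) < π / 2) := by
  have hxi := hrange i hi.le
  have hxi' := hrange (i + 1) hi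
  have hsol := h.mono hxi.1 (hmono.monotoneOn hi.le hi (by omega)) hxi'.2
  have hk' := ae_restrict_of_ae_restrict_of_subset (Ioo_subset_Ioo hxi.1 hxi'.2) hk
  have hIcc : Icc (x i) (x (i + 1)) ⊆ Icc α β := Icc_subset_Icc hxi.1 hxi'.2
  rcases Nat.even_or_odd i with he | ho
  · refine hsol.neumann_dirichlet_gap hr hk' (hzV i hi.le he) (hzU (i + 1) hi he.add_one)
      fun t ht hUt => ?_
    obtain ⟨j, hj, hjo, rfl⟩ := hallU t (hIcc (Ico_subset_Icc_self ht)) hUt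
    exact Nat.not_odd_iff_even.2 he (hmono.eq_of_mem_Ico hi hj ht ▸ hjo)
  · refine hsol.dirichlet_neumann_gap hr hk' (hzU i hi.le ho) (hzV (i + 1) hi ho.add_one)
      fun t ht hUt => ?_
    obtain ⟨j, hj, hjo, rfl⟩ := hallU t (hIcc (Ioc_subset_Icc_self ht)) hUt
    exact Nat.not_odd_iff_even.2 ho.add_one (hmono.eq_add_one_of_mem_Ioc hi hj ht ▸ hjo)

theorem number_of_zeros_ge_general (L : ℝ) (hL : 0 < L) (n : ℕ) (hn : 1 ≤ n)
    (a u v : ℝ → ℝ) (m : ℕ) (x : ℕ → ℝ)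
    (ha : IntegrableOn a (Ioo 0 L))
    (hprec₁ : ∀ᵐ t ∂(volume.restrict (Ioo 0 L)), (n : ℝ) ^ 2 * π ^ 2 / L ^ 2 ≤ a t)
    (hprec₂ : 0 < volume (Ioo 0 L ∩ {t | (n : ℝ) ^ 2 * π ^ 2 / L ^ 2 < a t}))
    (hu : ∀ t ∈ Icc (0:ℝ) L, u t = u 0 + ∫ s in (0:ℝ)..t, v s)
    (hv : ∀ t ∈ Icc (0:ℝ) L, v t = - ∫ s in (0:ℝ)..t, a s * u s)
    (hmono : StrictMonoOn x (Iic (2 * m)))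
    (hx0 : x 0 = 0) (hxL : x (2 * m) = L)
    (hrange : ∀ i ≤ 2 * m, x i ∈ Icc (0:ℝ) L)
    (hzv : ∀ i ≤ 2 * m, Even i → v (x i) = 0)
    (hzu : ∀ i ≤ 2 * m, Odd i → u (x i) = 0)
    (hallv : ∀ t ∈ Icc (0:ℝ) L, v t = 0 → ∃ i ≤ 2 * m, Even i ∧ t = x i)
    (hallu : ∀ t ∈ Icc (0:ℝ) L, u t = 0 → ∃ i ≤ 2 * m, Odd i ∧ t = x i) :
    m ≥ n + 1 := by
  set r : ℝ := n * π / L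
  have hr : 0 < r := by positivity
  have hr2 : r ^ 2 = (n : ℝ) ^ 2 * π ^ 2 / L ^ 2 := by ring
  rw [← hr2] at hprec₁ hprec₂
  have hfin : {t ∈ Icc 0 L | v t = 0}.Finite := by
    refine ((finite_Iic (2 * m)).image x).subset ?_
    rintro t ⟨ht, hvt⟩
    obtain ⟨i, hi, -, rfl⟩ := hallv t ht hvt
    exact mem_image_of_mem x hi
  have hsol := IsHillSolutionOn.of_finite_zeros hL
    ((intervalIntegrable_iff_integrableOn_Ioo_of_le hL.le).2 ha) hu hv hfin
  have hgap := fun i => hsol.gap_le_of_interlacing hr hprec₁ hmono hrange hzv hzu hallu (i := i)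
  obtain ⟨i₀, hi₀, hpos⟩ := exists_measure_Ioo_inter_pos x {t | r ^ 2 < a t} (N := 2 * m)
    (by rwa [hx0, hxL])
  have hsum : r * L < (2 * m : ℕ) * (π / 2) := calc
    r * L = ∑ i ∈ Finset.range (2 * m), r * (x (i + 1) - x i) := by
      rw [← Finset.mul_sum, Finset.sum_range_sub, hx0, hxL, sub_zero]
    _ < ∑ i ∈ Finset.range (2 * m), π / 2 :=
      Finset.sum_lt_sum (fun i hi => (hgap i (Finset.mem_range.1 hi)).1)
        ⟨i₀, Finset.mem_range.2 hi₀, (hgap i₀ hi₀).2 hpos⟩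
    _ = (2 * m : ℕ) * (π / 2) := by simp
  have hrL : r * L = n * π := by simp only [r]; field_simp
  have : (n : ℝ) < m := by
    push_cast at hsum
    nlinarith [pi_pos]
  exact_mod_cast this

/-- if λₙ ≺ a and u is a nontrivial solution of the Neumann problem
u'' + au = 0, u'(0) = u'(L) = 0 (v being u'), whose derivative's zeros in [0,L] are
0 = x₀ < x₂ < … < x_{2m} = L and whose zeros interlace as x₁ < x₃ < … < x_{2m-1},
then m ≥ n + 1. -/
theorem number_of_zeros_ge (L : ℝ) (hL : 0 < L) (n : ℕ) (hn : 1 ≤ n)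
    (a u v : ℝ → ℝ) (m : ℕ) (hm : 1 ≤ m) (x : ℕ → ℝ)
    (ha : IntegrableOn a (Ioo 0 L))
    (hprec₁ : ∀ᵐ t ∂(volume.restrict (Ioo 0 L)), (n : ℝ) ^ 2 * π ^ 2 / L ^ 2 ≤ a t)
    (hprec₂ : 0 < volume (Ioo 0 L ∩ {t | (n : ℝ) ^ 2 * π ^ 2 / L ^ 2 < a t}))
    (hu : ∀ t ∈ Icc (0:ℝ) L, u t = u 0 + ∫ s in (0:ℝ)..t, v s)
    (hv : ∀ t ∈ Icc (0:ℝ) L, v t = - ∫ s in (0:ℝ)..t, a s * u s)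
    (hvL : v L = 0)
    (hnontriv : ∃ t ∈ Icc (0:ℝ) L, u t ≠ 0)
    (hmono : StrictMonoOn x (Iic (2 * m)))
    (hx0 : x 0 = 0) (hxL : x (2 * m) = L)
    (hrange : ∀ i ≤ 2 * m, x i ∈ Icc (0:ℝ) L)
    (hzv : ∀ i ≤ 2 * m, Even i → v (x i) = 0)
    (hzu : ∀ i ≤ 2 * m, Odd i → u (x i) = 0)
    (hallv : ∀ t ∈ Icc (0:ℝ) L, v t = 0 → ∃ i ≤ 2 * m, Even i ∧ t = x i)
    (hallu : ∀ t ∈ Icc (0:ℝ) L, u t = 0 → ∃ i ≤ 2 * m, Odd i ∧ t = x i) :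
    m ≥ n + 1 :=
  number_of_zeros_ge_general L hL n hn a u v m x ha hprec₁ hprec₂ hu hv hmono hx0 hxL hrange hzv hzu
    hallv hallu
end

section
/- Let 0 = y₀ < y₁ < … < y_{2n+1} < y_{2n+2} = L with y_{k+1} - y_k < L/(2n) for all k, and suppose y_{i+1} - y_i ≠ y_{j+1} - y_j for some i, j. Then Σ_{i=0}^{2n+1} (nπ/L) cot(nπ(y_{i+1}-y_i)/L) > (2πn(n+1)/L) cot(nπ/(2(n+1))), and consequently there exists a ∈ L¹(0,L) with λₙ ≺ a satisfying the piecewise condition ‖a - λₙ‖_{L¹(y_i,y_{i+1})} < (nπ/L)cot(nπ(y_{i+1}-y_i)/L) for all i, but with ‖a - λₙ‖_{L¹(0,L)} > β₁,ₙ = (2πn(n+1)/L)cot(nπ/(2(n+1))). -/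
open MeasureTheory Real Set intervalIntegral

/-!
The gaps `gᵢ = y (i + 1) - y i` of the partition sum to `L`, so the angles `nπ gᵢ / L` lie in
`(0, π/2)` and average to `nπ / (2(n + 1))`; strict convexity of `cot` on `(0, π/2)` and the strict
Jensen inequality give the cotangent bound. For the second part let `bᵢ` be the piecewise bounds
and `β` the global one, and pick `θ < 1` with `θ ∑ bᵢ > β`. The step function equal to
`λₙ + θ bᵢ / gᵢ` on the `i`-th piece has `L¹`-distance `θ bᵢ < bᵢ` from `λₙ` there, but total
`L¹`-distance `θ ∑ bᵢ > β` on `(0, L)`.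
-/

namespace Real

theorem hasDerivAt_cot_s19 {x : ℝ} (hx : sin x ≠ 0) : HasDerivAt cot (-1 / sin x ^ 2) x := by
  have hcot : cot = fun y => cos y / sin y := funext cot_eq_cos_div_sin
  rw [hcot]
  refine ((hasDerivAt_cos x).div (hasDerivAt_sin x) hx).congr_deriv ?_
  congr 1
  linear_combination -sin_sq_add_cos_sq x

theorem cot_pos_of_mem_Ioo {x : ℝ} (hx : x ∈ Ioo 0 (π / 2)) : 0 < cot x := by
  rw [cot_eq_cos_div_sin]
  exact div_pos (cos_pos_of_mem_Ioo ⟨by linarith [hx.1, pi_pos], hx.2⟩)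
    (sin_pos_of_pos_of_lt_pi hx.1 (by linarith [hx.2, pi_pos]))

-- `cot' = -1 / sin²` is strictly increasing because `sin` is positive and increasing there.
theorem strictConvexOn_cot : StrictConvexOn ℝ (Ioo 0 (π / 2)) cot := by
  have hsin : ∀ x ∈ Ioo 0 (π / 2), 0 < sin x := fun x hx =>
    sin_pos_of_pos_of_lt_pi hx.1 (by linarith [hx.2, pi_pos])
  have hderiv : ∀ x ∈ Ioo 0 (π / 2), HasDerivAt cot (-1 / sin x ^ 2) x := fun x hx =>
    hasDerivAt_cot_s19 (hsin x hx).ne'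
  refine StrictMonoOn.strictConvexOn_of_deriv (convex_Ioo _ _)
    (fun x hx => (hderiv x hx).continuousAt.continuousWithinAt) ?_
  rw [interior_Ioo]
  intro x hx z hz hxz
  have hsin_lt : sin x < sin z :=
    sin_lt_sin_of_lt_of_le_pi_div_two (by linarith [hx.1, pi_pos]) hz.2.le hxz
  rw [(hderiv x hx).deriv, (hderiv z hz).deriv, neg_div, neg_div, neg_lt_neg_iff]
  exact one_div_lt_one_div_of_lt (pow_pos (hsin x hx) 2)
    (pow_lt_pow_left₀ hsin_lt (hsin x hx).le two_ne_zero)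

end Real

theorem StrictConvexOn.map_sum_div_card_lt {ι : Type*} {s : Set ℝ} {f : ℝ → ℝ}
    (hf : StrictConvexOn ℝ s f) {t : Finset ι} {p : ι → ℝ} (hmem : ∀ i ∈ t, p i ∈ s)
    (hp : ∃ j ∈ t, ∃ k ∈ t, p j ≠ p k) :
    f ((∑ i ∈ t, p i) / t.card) < (∑ i ∈ t, f (p i)) / t.card := by
  obtain ⟨j, hj, -⟩ := id hp
  have hcard : (t.card : ℝ) ≠ 0 := Nat.cast_ne_zero.2 (Finset.card_ne_zero_of_mem hj)
  have hw : ∑ _i ∈ t, (t.card : ℝ)⁻¹ = 1 := by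
    rw [Finset.sum_const, nsmul_eq_mul, mul_inv_cancel₀ hcard]
  have := hf.map_sum_lt (fun _ _ => inv_pos.2 (lt_of_le_of_ne (Nat.cast_nonneg _) hcard.symm))
    hw hmem hp
  rwa [← Finset.smul_sum, ← Finset.smul_sum, smul_eq_mul, smul_eq_mul, inv_mul_eq_div,
    inv_mul_eq_div] at this

theorem StrictMonoOn.succ_sub_pos {N i : ℕ} {y : ℕ → ℝ} (hy : StrictMonoOn y (Iic N))
    (hi : i < N) : 0 < y (i + 1) - y i :=
  sub_pos.2 (hy (mem_Iic.2 hi.le) (mem_Iic.2 hi) i.lt_succ_self)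

noncomputable def partitionStep (N : ℕ) (y c : ℕ → ℝ) (x : ℝ) : ℝ :=
  ∑ j ∈ Finset.range N, (Ioc (y j) (y (j + 1))).indicator (fun _ => c j) x

section partitionStep

variable {N : ℕ} {y c : ℕ → ℝ}

theorem partitionStep_eq (hy : MonotoneOn y (Iic N)) {i : ℕ} (hi : i < N) {x : ℝ}
    (hx : x ∈ Ioc (y i) (y (i + 1))) : partitionStep N y c x = c i := by
  rw [partitionStep, Finset.sum_eq_single_of_mem i (Finset.mem_range.2 hi), indicator_of_mem hx]
  intro j hj hji
  have hjN : j + 1 ≤ N := Finset.mem_range.1 hj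
  refine indicator_of_notMem (fun hxj => ?_) _
  rcases lt_or_gt_of_ne hji with hlt | hlt
  · have := hy (mem_Iic.2 hjN) (mem_Iic.2 hi.le) hlt
    linarith [hx.1, hxj.2]
  · have := hy (mem_Iic.2 hi) (mem_Iic.2 (by omega)) hlt
    linarith [hx.2, hxj.1]

theorem partitionStep_nonneg (hc : ∀ j < N, 0 ≤ c j) (x : ℝ) : 0 ≤ partitionStep N y c x :=
  Finset.sum_nonneg fun j hj => indicator_nonneg (fun _ _ => hc j (Finset.mem_range.1 hj)) x

theorem integrable_partitionStep : Integrable (partitionStep N y c) :=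
  integrable_finsetSum _ fun j _ =>
    (integrableOn_const (C := c j) measure_Ioc_lt_top.ne).integrable_indicator measurableSet_Ioc

theorem integral_partitionStep_piece (hy : MonotoneOn y (Iic N)) {i : ℕ} (hi : i < N) :
    ∫ x in y i..y (i + 1), partitionStep N y c x = (y (i + 1) - y i) * c i := by
  have hle : y i ≤ y (i + 1) := hy (mem_Iic.2 hi.le) (mem_Iic.2 hi) i.le_succ
  rw [← smul_eq_mul, ← intervalIntegral.integral_const]
  refine intervalIntegral.integral_congr_ae (ae_of_all _ fun x hx => ?_)
  rw [uIoc_of_le hle] at hx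
  exact partitionStep_eq hy hi hx

end partitionStep

theorem exists_integral_abs_sub_lt_of_lt_sum {N : ℕ} {y b : ℕ → ℝ} {lam β : ℝ}
    (hy : StrictMonoOn y (Iic N)) (hb : ∀ i < N, 0 < b i) (hβ : 0 ≤ β)
    (hβb : β < ∑ i ∈ Finset.range N, b i) :
    ∃ a : ℝ → ℝ,
      IntegrableOn a (Ioo (y 0) (y N)) ∧
      (∀ᵐ x ∂(volume.restrict (Ioo (y 0) (y N))), lam ≤ a x) ∧
      0 < volume (Ioo (y 0) (y N) ∩ {x | lam < a x}) ∧
      (∀ i < N, (∫ x in y i..y (i + 1), |a x - lam|) < b i) ∧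
      β < ∫ x in y 0..y N, |a x - lam| := by
  set S := ∑ i ∈ Finset.range N, b i
  have hS : 0 < S := hβ.trans_lt hβb
  obtain ⟨θ, hβθ, hθ⟩ := exists_between ((div_lt_one hS).2 hβb)
  have hθ_pos : 0 < θ := (div_nonneg hβ hS.le).trans_lt hβθ
  have hgap : ∀ i < N, 0 < y (i + 1) - y i := fun i hi => hy.succ_sub_pos hi
  set c : ℕ → ℝ := fun i => θ * b i / (y (i + 1) - y i)
  have hc : ∀ i < N, 0 < c i := fun i hi => div_pos (mul_pos hθ_pos (hb i hi)) (hgap i hi)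
  have hpiece : ∀ i < N, ∫ x in y i..y (i + 1), partitionStep N y c x = θ * b i := fun i hi => by
    rw [integral_partitionStep_piece hy.monotoneOn hi, mul_div_cancel₀ _ (hgap i hi).ne']
  have habs : ∀ x, |lam + partitionStep N y c x - lam| = partitionStep N y c x := fun x => by
    rw [add_sub_cancel_left, abs_of_nonneg (partitionStep_nonneg (fun j hj => (hc j hj).le) x)]
  refine ⟨fun x => lam + partitionStep N y c x,
    (integrableOn_const (C := lam) measure_Ioo_lt_top.ne).add integrable_partitionStep.integrableOn,
    ae_of_all _ fun x => le_add_of_nonneg_right (partitionStep_nonneg (fun j hj => (hc j hj).le) x),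
    ?_, fun i hi => ?_, ?_⟩
  · have hN : 0 < N := Nat.pos_of_ne_zero fun h => by simp [S, h] at hS
    have hsub : Ioo (y 0) (y 1) ⊆ Ioo (y 0) (y N) ∩ {x | lam < lam + partitionStep N y c x} :=
      fun x hx => ⟨⟨hx.1, hx.2.trans_le (hy.monotoneOn (mem_Iic.2 hN) (mem_Iic.2 le_rfl) hN)⟩,
        by simpa [partitionStep_eq hy.monotoneOn hN (Ioo_subset_Ioc_self hx)] using hc 0 hN⟩
    refine lt_of_lt_of_le ?_ (measure_mono hsub)
    simpa using hgap 0 hN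
  · simp only [habs, hpiece i hi]
    exact mul_lt_of_lt_one_left (hb i hi) hθ
  · simp only [habs]
    rw [← sum_integral_adjacent_intervals fun k _ => integrable_partitionStep.intervalIntegrable,
      Finset.sum_congr rfl fun i hi => hpiece i (Finset.mem_range.1 hi), ← Finset.mul_sum]
    exact (div_lt_iff₀ hS).1 hβθ

theorem mul_pi_mul_div_mem_Ioo {k g L : ℝ} (hk : 0 < k) (hL : 0 < L) (hg : 0 < g)
    (hgk : g < L / (2 * k)) : k * π * g / L ∈ Ioo 0 (π / 2) := by
  rw [lt_div_iff₀ (by positivity)] at hgk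
  refine ⟨by positivity, ?_⟩
  rw [div_lt_iff₀ hL]
  nlinarith [pi_pos]

theorem card_mul_cot_lt_sum_cot_of_partition {N : ℕ} {y : ℕ → ℝ} {κ L : ℝ} (hκ : κ ≠ 0)
    (hL : L ≠ 0) (hy0 : y 0 = 0) (hyN : y N = L)
    (harg : ∀ i < N, κ * (y (i + 1) - y i) / L ∈ Ioo 0 (π / 2))
    (hne : ∃ i < N, ∃ j < N, y (i + 1) - y i ≠ y (j + 1) - y j) :
    N * cot (κ / N) < ∑ i ∈ Finset.range N, cot (κ * (y (i + 1) - y i) / L) := by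
  obtain ⟨i, hi, j, hj, hij⟩ := hne
  have hN : (0 : ℝ) < N := Nat.cast_pos.2 (Nat.zero_lt_of_lt hi)
  have hsum : ∑ i ∈ Finset.range N, κ * (y (i + 1) - y i) / L = κ := by
    rw [← Finset.sum_div, ← Finset.mul_sum, Finset.sum_range_sub, hy0, hyN, sub_zero,
      mul_div_cancel_right₀ _ hL]
  have hjensen := strictConvexOn_cot.map_sum_div_card_lt (t := Finset.range N)
    (fun i hi => harg i (Finset.mem_range.1 hi))
    ⟨i, Finset.mem_range.2 hi, j, Finset.mem_range.2 hj,
      fun h => hij (mul_left_cancel₀ hκ ((div_left_inj' hL).1 h))⟩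
  rwa [Finset.card_range, hsum, lt_div_iff₀ hN, mul_comm] at hjensen

/-- if the gaps of the partition are all < L/(2n) and not all equal,
then Σ (nπ/L)cot(nπ(y_{i+1}-y_i)/L) > β₁,ₙ = (2πn(n+1)/L)cot(nπ/(2(n+1))), and
consequently there exists a ∈ L¹(0,L) with λₙ ≺ a satisfying the piecewise L¹
condition on every subinterval but with ‖a - λₙ‖_{L¹(0,L)} > β₁,ₙ. -/
theorem piecewise_strictly_more_general (L : ℝ) (hL : 0 < L) (n : ℕ) (hn : 1 ≤ n)
    (y : ℕ → ℝ) (hy0 : y 0 = 0) (hyL : y (2 * n + 2) = L)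
    (hmono : StrictMonoOn y (Iic (2 * n + 2)))
    (hgap : ∀ k ≤ 2 * n + 1, y (k + 1) - y k < L / (2 * n))
    (hne : ∃ i ≤ 2 * n + 1, ∃ j ≤ 2 * n + 1, y (i + 1) - y i ≠ y (j + 1) - y j) :
    (∑ i ∈ Finset.range (2 * n + 2),
        (n : ℝ) * π / L * Real.cot ((n : ℝ) * π * (y (i + 1) - y i) / L)) >
      2 * π * n * (n + 1) / L * Real.cot ((n : ℝ) * π / (2 * ((n : ℝ) + 1))) ∧
    ∃ a : ℝ → ℝ,
      IntegrableOn a (Ioo 0 L) ∧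
      (∀ᵐ x ∂(volume.restrict (Ioo 0 L)), (n : ℝ) ^ 2 * π ^ 2 / L ^ 2 ≤ a x) ∧
      0 < volume (Ioo 0 L ∩ {x | (n : ℝ) ^ 2 * π ^ 2 / L ^ 2 < a x}) ∧
      (∀ i ≤ 2 * n + 1,
        (∫ x in y i..y (i + 1), |a x - (n : ℝ) ^ 2 * π ^ 2 / L ^ 2|) <
          (n : ℝ) * π / L * Real.cot ((n : ℝ) * π * (y (i + 1) - y i) / L)) ∧
      (∫ x in (0:ℝ)..L, |a x - (n : ℝ) ^ 2 * π ^ 2 / L ^ 2|) >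
        2 * π * n * (n + 1) / L * Real.cot ((n : ℝ) * π / (2 * ((n : ℝ) + 1))) := by
  have hn0 : (0 : ℝ) < n := Nat.cast_pos.2 hn
  have harg : ∀ i < 2 * n + 2, (n : ℝ) * π * (y (i + 1) - y i) / L ∈ Ioo 0 (π / 2) :=
    fun i hi => mul_pi_mul_div_mem_Ioo hn0 hL (hmono.succ_sub_pos hi) (hgap i (by omega))
  have hmid : (n : ℝ) * π / (2 * ((n : ℝ) + 1)) ∈ Ioo 0 (π / 2) :=
    ⟨by positivity, by rw [div_lt_div_iff₀ (by positivity) two_pos]; nlinarith [pi_pos]⟩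
  have hsum : 2 * π * n * (n + 1) / L * cot ((n : ℝ) * π / (2 * ((n : ℝ) + 1))) <
      ∑ i ∈ Finset.range (2 * n + 2),
        (n : ℝ) * π / L * cot ((n : ℝ) * π * (y (i + 1) - y i) / L) := by
    have hcot := card_mul_cot_lt_sum_cot_of_partition (by positivity) hL.ne' hy0 hyL harg
      (by obtain ⟨i, hi, j, hj, hij⟩ := hne; exact ⟨i, by omega, j, by omega, hij⟩)
    rw [show ((2 * n + 2 : ℕ) : ℝ) = 2 * ((n : ℝ) + 1) by push_cast; ring] at hcot
    rw [← Finset.mul_sum]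
    calc _ = (n : ℝ) * π / L * (2 * ((n : ℝ) + 1) * cot ((n : ℝ) * π / (2 * ((n : ℝ) + 1)))) := by
          ring
      _ < _ := by gcongr
  obtain ⟨a, ha_int, ha_ge, ha_pos, ha_piece, ha_total⟩ :=
    exists_integral_abs_sub_lt_of_lt_sum (lam := (n : ℝ) ^ 2 * π ^ 2 / L ^ 2) hmono
      (fun i hi => mul_pos (by positivity) (cot_pos_of_mem_Ioo (harg i hi)))
      (mul_pos (by positivity) (cot_pos_of_mem_Ioo hmid)).le hsum
  rw [hy0, hyL] at ha_int ha_ge ha_pos ha_total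
  exact ⟨hsum, a, ha_int, ha_ge, ha_pos, fun i hi => ha_piece i (by omega), ha_total⟩
end
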